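/- Weakening is height-preserving admissible in the nested sequent calculus for GL: if Γ{·} has a cut-free derivation of height h, then for any nested sequent Δ, Γ{Δ} has a cut-free derivation of height at most h. -/
import Mathlib


/-- Formulas of GL in negation normal form. -/
inductive Formula : Type where
  | pos : ℕ → Formula
  | neg : ℕ → Formula
  | and : Formula → Formula → Formula
  | or  : Formula → Formula → Formula
  | box : Formula → Formula
  | dia : Formula → Formula
deriving DecidableEq

/-- Negation `A⊥` of a formula, via De Morgan duality. -/
def Formula.negate : Formula → Formula
  | .pos a => .neg a
  | .neg a => .pos a
  | .and A B => .or A.negate B.negate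
  | .or A B => .and A.negate B.negate
  | .box A => .dia A.negate
  | .dia A => .box A.negate

/-- An element of a nested sequent: a formula or a nested (bracketed) sequent. -/
inductive SeqElem : Type where
  | fml : Formula → SeqElem
  | nest : List SeqElem → SeqElem

/-- A nested sequent. -/
abbrev Sequent := List SeqElem

/-- Unary contexts: a nested sequent with a single hole. -/
inductive Ctx : Type where
  | hole : Sequent → Ctx
  | nest : Sequent → Ctx → Ctx

/-- Fill the hole of a context with a sequent. -/
def Ctx.fill : Ctx → Sequent → Sequent
  | .hole Δ, Γ => Δ ++ Γ
  | .nest Δ c, Γ => .nest (c.fill Γ) :: Δ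

/-- Depth of a context: number of brackets surrounding the hole. -/
def Ctx.depth : Ctx → ℕ
  | .hole _ => 0
  | .nest _ c => c.depth + 1

/-- Equivalence of nested sequents up to (deep) exchange. -/
inductive SeqEquiv : Sequent → Sequent → Prop where
  | nil : SeqEquiv [] []
  | cons {e : SeqElem} {Γ Δ : Sequent} : SeqEquiv Γ Δ → SeqEquiv (e :: Γ) (e :: Δ)
  | consNest {Γ' Δ' Γ Δ : Sequent} :
      SeqEquiv Γ' Δ' → SeqEquiv Γ Δ → SeqEquiv (.nest Γ' :: Γ) (.nest Δ' :: Δ)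
  | swap (a b : SeqElem) (Γ : Sequent) : SeqEquiv (a :: b :: Γ) (b :: a :: Γ)
  | trans {Γ Δ Θ : Sequent} : SeqEquiv Γ Δ → SeqEquiv Δ Θ → SeqEquiv Γ Θ

/-- `DerivH n Γ`: `Γ` has a cut-free derivation of height at most `n`. -/
inductive DerivH : ℕ → Sequent → Prop where
  | id (n : ℕ) (c : Ctx) (a : ℕ) :
      DerivH n (c.fill [.fml (.pos a), .fml (.neg a)])
  | and {n : ℕ} {c : Ctx} {A B : Formula} :
      DerivH n (c.fill [.fml A]) → DerivH n (c.fill [.fml B]) →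
      DerivH (n + 1) (c.fill [.fml (.and A B)])
  | or {n : ℕ} {c : Ctx} {A B : Formula} :
      DerivH n (c.fill [.fml A, .fml B]) →
      DerivH (n + 1) (c.fill [.fml (.or A B)])
  | box {n : ℕ} {c : Ctx} {A : Formula} :
      DerivH n (c.fill [.nest [.fml (.dia A.negate), .fml A]]) →
      DerivH (n + 1) (c.fill [.fml (.box A)])
  | dia {n : ℕ} (c d : Ctx) {A : Formula} :
      0 < d.depth →
      DerivH n (c.fill (d.fill [.fml A] ++ [.fml (.dia A)])) →
      DerivH (n + 1) (c.fill (d.fill [] ++ [.fml (.dia A)]))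
  | exch {n : ℕ} {Γ Δ : Sequent} : SeqEquiv Γ Δ → DerivH n Γ → DerivH n Δ
  | up {n : ℕ} {Γ : Sequent} : DerivH n Γ → DerivH (n + 1) Γ

/-- Derivability where cut is permitted on formulas satisfying `P`. -/
inductive DerivWith (P : Formula → Prop) : Sequent → Prop where
  | id (c : Ctx) (a : ℕ) :
      DerivWith P (c.fill [.fml (.pos a), .fml (.neg a)])
  | and {c : Ctx} {A B : Formula} :
      DerivWith P (c.fill [.fml A]) → DerivWith P (c.fill [.fml B]) →
      DerivWith P (c.fill [.fml (.and A B)])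
  | or {c : Ctx} {A B : Formula} :
      DerivWith P (c.fill [.fml A, .fml B]) →
      DerivWith P (c.fill [.fml (.or A B)])
  | box {c : Ctx} {A : Formula} :
      DerivWith P (c.fill [.nest [.fml (.dia A.negate), .fml A]]) →
      DerivWith P (c.fill [.fml (.box A)])
  | dia (c d : Ctx) {A : Formula} :
      0 < d.depth →
      DerivWith P (c.fill (d.fill [.fml A] ++ [.fml (.dia A)])) →
      DerivWith P (c.fill (d.fill [] ++ [.fml (.dia A)]))
  | cut {c : Ctx} {A : Formula} : P A →
      DerivWith P (c.fill [.fml A]) → DerivWith P (c.fill [.fml A.negate]) →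
      DerivWith P (c.fill [])
  | exch {Γ Δ : Sequent} : SeqEquiv Γ Δ → DerivWith P Γ → DerivWith P Δ

/-- Cut-free derivability. -/
abbrev Deriv : Sequent → Prop := DerivWith (fun _ => False)

/-- Deep weakening relation: `WL Γ Δ` iff `Δ` is `Γ` with extra elements
inserted (at any depth). -/
inductive WL : Sequent → Sequent → Prop where
  | nil : WL [] []
  | cons (e : SeqElem) {Γ Δ : Sequent} : WL Γ Δ → WL (e :: Γ) (e :: Δ)
  | consNest {Γ' Δ' Γ Δ : Sequent} :
      WL Γ' Δ' → WL Γ Δ → WL (.nest Γ' :: Γ) (.nest Δ' :: Δ)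
  | weak (e : SeqElem) {Γ Δ : Sequent} : WL Γ Δ → WL Γ (e :: Δ)

/-- One-element weakening. -/
def WEl (e e' : SeqElem) : Prop :=
  e = e' ∨ ∃ N N', e = .nest N ∧ e' = .nest N' ∧ WL N N'

theorem WL.refl : ∀ Γ : Sequent, WL Γ Γ
  | [] => .nil
  | e :: Γ => .cons e (WL.refl Γ)

theorem WL.consE {e e' : SeqElem} {Γ Δ : Sequent} (h : WEl e e') (hw : WL Γ Δ) :
    WL (e :: Γ) (e' :: Δ) := by
  rcases h with rfl | ⟨N, N', rfl, rfl, hN⟩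
  · exact .cons e hw
  · exact .consNest hN hw

theorem WEl.refl (e : SeqElem) : WEl e e := Or.inl rfl

theorem WEl.fml {A : Formula} {e' : SeqElem} (h : WEl (.fml A) e') : e' = .fml A := by
  rcases h with rfl | ⟨N, N', hN, _, _⟩ <;> simp_all

theorem WEl.nest {N : Sequent} {e' : SeqElem} (h : WEl (.nest N) e') :
    ∃ N', e' = .nest N' ∧ WL N N' := by
  rcases h with rfl | ⟨M, M', hM, rfl, hN⟩
  · exact ⟨N, rfl, WL.refl N⟩
  · cases hM; exact ⟨M', rfl, hN⟩

theorem WL.nilAny : ∀ Δ : Sequent, WL [] Δ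
  | [] => .nil
  | e :: Δ => .weak e (WL.nilAny Δ)

theorem WL.push {Γ Δ : Sequent} (E : Sequent) (h : WL Γ Δ) : WL Γ (E ++ Δ) := by
  induction E with
  | nil => exact h
  | cons e E ih => exact .weak e ih

theorem WL.append {A A' B B' : Sequent} (h1 : WL A A') (h2 : WL B B') :
    WL (A ++ B) (A' ++ B') := by
  induction h1 with
  | nil => exact h2
  | cons e _ ih => exact .cons e ih
  | consNest hN _ _ ih => exact .consNest hN ih
  | weak e _ ih => exact .weak e ih

theorem WL.split : ∀ {Γ Θ : Sequent}, WL Γ Θ → ∀ A B, Γ = A ++ B →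
    ∃ A' B', Θ = A' ++ B' ∧ WL A A' ∧ WL B B' := by
  intro Γ Θ h
  induction h with
  | nil =>
    intro A B hAB
    obtain ⟨rfl, rfl⟩ := List.append_eq_nil_iff.mp hAB.symm
    exact ⟨[], [], rfl, .nil, .nil⟩
  | @cons e Γ Δ hw ih =>
    intro A B hAB
    cases A with
    | nil =>
      simp only [List.nil_append] at hAB; subst hAB
      exact ⟨[], e :: Δ, rfl, .nil, .cons e hw⟩
    | cons a A0 =>
      simp only [List.cons_append, List.cons.injEq] at hAB
      obtain ⟨rfl, hAB⟩ := hAB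
      obtain ⟨A', B', rfl, h1, h2⟩ := ih A0 B hAB
      exact ⟨e :: A', B', rfl, .cons e h1, h2⟩
  | @consNest Γ' Δ' Γ Δ hN hw _ ih =>
    intro A B hAB
    cases A with
    | nil =>
      simp only [List.nil_append] at hAB; subst hAB
      exact ⟨[], .nest Δ' :: Δ, rfl, .nil, .consNest hN hw⟩
    | cons a A0 =>
      simp only [List.cons_append, List.cons.injEq] at hAB
      obtain ⟨rfl, hAB⟩ := hAB
      obtain ⟨A', B', rfl, h1, h2⟩ := ih A0 B hAB
      exact ⟨.nest Δ' :: A', B', rfl, .consNest hN h1, h2⟩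
  | @weak f Γ Δ hw ih =>
    intro A B hAB
    obtain ⟨A', B', rfl, h1, h2⟩ := ih A B hAB
    exact ⟨f :: A', B', rfl, .weak f h1, h2⟩

theorem WL.invCons : ∀ {X Θ : Sequent}, WL X Θ → ∀ e Γ, X = e :: Γ →
    ∃ E e' Θ0, Θ = E ++ e' :: Θ0 ∧ WEl e e' ∧ WL Γ Θ0 := by
  intro X Θ h
  induction h with
  | nil => intro e Γ h; exact absurd h (by simp)
  | @cons e0 Γ0 Δ hw _ =>
    intro e Γ hEq
    injection hEq with h1 h2
    subst h1; subst h2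
    exact ⟨[], e0, Δ, rfl, WEl.refl e0, hw⟩
  | @consNest Γ' Δ' Γ0 Δ hN hw _ =>
    intro e Γ hEq
    injection hEq with h1 h2
    subst h1; subst h2
    exact ⟨[], .nest Δ', Δ, rfl, Or.inr ⟨Γ', Δ', rfl, rfl, hN⟩, hw⟩
  | @weak f Γ0 Δ hw ih =>
    intro e Γ hEq
    obtain ⟨E, e', Θ0, rfl, a, b⟩ := ih e Γ hEq
    exact ⟨f :: E, e', Θ0, rfl, a, b⟩

theorem SeqEquiv.refl : ∀ Γ : Sequent, SeqEquiv Γ Γ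
  | [] => .nil
  | _ :: Γ => .cons (SeqEquiv.refl Γ)

theorem SeqEquiv.symm {Γ Δ : Sequent} (h : SeqEquiv Γ Δ) : SeqEquiv Δ Γ := by
  induction h with
  | nil => exact .nil
  | cons _ ih => exact .cons ih
  | consNest _ _ ih1 ih2 => exact .consNest ih1 ih2
  | swap a b Γ => exact .swap b a Γ
  | trans _ _ ih1 ih2 => exact .trans ih2 ih1

theorem seqEquiv_of_perm {Γ Δ : Sequent} (h : Γ.Perm Δ) : SeqEquiv Γ Δ := by
  induction h with
  | nil => exact .nil
  | cons e _ ih => exact .cons ih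
  | swap a b l => exact .swap b a l
  | trans _ _ ih1 ih2 => exact .trans ih1 ih2

theorem seqEquiv_ms {l1 l2 : List SeqElem} (h : (l1 : Multiset SeqElem) = l2) :
    SeqEquiv l1 l2 := seqEquiv_of_perm (Multiset.coe_eq_coe.mp h)

theorem SeqEquiv.appL (E : Sequent) {X Y : Sequent} (h : SeqEquiv X Y) :
    SeqEquiv (E ++ X) (E ++ Y) := by
  induction E with
  | nil => exact h
  | cons e E ih => exact .cons ih

theorem SeqEquiv.appR {X Y : Sequent} (h : SeqEquiv X Y) (E : Sequent) :
    SeqEquiv (X ++ E) (Y ++ E) := by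
  induction h with
  | nil => exact SeqEquiv.refl E
  | cons _ ih => exact .cons ih
  | consNest h1 _ _ ih2 => exact .consNest h1 ih2
  | swap a b Γ => exact .swap a b (Γ ++ E)
  | trans _ _ ih1 ih2 => exact .trans ih1 ih2

theorem fill_equiv (c : Ctx) {X Y : Sequent} (h : SeqEquiv X Y) :
    SeqEquiv (c.fill X) (c.fill Y) := by
  induction c with
  | hole Γ => exact SeqEquiv.appL Γ h
  | nest Γ c ih => exact .consNest ih (SeqEquiv.refl Γ)

/-- Extend a context by adding extra elements at the hole's level. -/
def Ctx.ext : Ctx → Sequent → Ctx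
  | .hole Γ, E => .hole (Γ ++ E)
  | .nest Γ c, E => .nest Γ (c.ext E)

theorem Ctx.ext_fill (c : Ctx) (E T : Sequent) :
    (c.ext E).fill T = c.fill (E ++ T) := by
  induction c with
  | hole Γ => simp [Ctx.ext, Ctx.fill]
  | nest Γ c ih => simp [Ctx.ext, Ctx.fill, ih]

theorem Ctx.ext_depth (c : Ctx) (E : Sequent) : (c.ext E).depth = c.depth := by
  induction c <;> simp [Ctx.ext, Ctx.depth, *]

theorem wl_commute : ∀ {Γ Δ : Sequent}, SeqEquiv Γ Δ → ∀ Θ, WL Δ Θ →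
    ∃ Θ', WL Γ Θ' ∧ SeqEquiv Θ' Θ := by
  intro Γ Δ h
  induction h with
  | nil => exact fun Θ hw => ⟨Θ, hw, SeqEquiv.refl Θ⟩
  | @cons e Γ Δ _ ih =>
    intro Θ hw
    obtain ⟨E, e', Θ0, rfl, we, hw0⟩ := hw.invCons e Δ rfl
    obtain ⟨Θ0', w', eq'⟩ := ih Θ0 hw0
    exact ⟨E ++ e' :: Θ0', .push E (WL.consE we w'), SeqEquiv.appL E (.cons eq')⟩
  | @consNest Γ' Δ' Γ Δ h1 h2 ih1 ih2 =>
    intro Θ hw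
    obtain ⟨E, e', Θ0, rfl, we, hw0⟩ := hw.invCons (.nest Δ') Δ rfl
    obtain ⟨N', rfl, wN⟩ := we.nest
    obtain ⟨N'', w1, eq1⟩ := ih1 _ wN
    obtain ⟨Θ0', w2, eq2⟩ := ih2 Θ0 hw0
    exact ⟨E ++ .nest N'' :: Θ0', .push E (.consNest w1 w2),
      SeqEquiv.appL E (.consNest eq1 eq2)⟩
  | swap a b Γ0 =>
    intro Θ hw
    obtain ⟨E1, b', Θ1, rfl, wb, hw1⟩ := hw.invCons b (a :: Γ0) rfl
    obtain ⟨E2, a', Θ2, rfl, wa, hw2⟩ := hw1.invCons a Γ0 rfl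
    refine ⟨(E1 ++ E2) ++ a' :: b' :: Θ2,
      .push (E1 ++ E2) (WL.consE wa (WL.consE wb hw2)), seqEquiv_ms ?_⟩
    simp only [← Multiset.coe_add, ← Multiset.cons_coe, ← Multiset.singleton_add]
    abel
  | trans h1 h2 ih1 ih2 =>
    intro Θ hw
    obtain ⟨Θ', w2, eq2⟩ := ih2 Θ hw
    obtain ⟨Θ'', w1, eq1⟩ := ih1 Θ' w2
    exact ⟨Θ'', w1, eq1.trans eq2⟩

theorem wl_decomp : ∀ (c : Ctx) (S : Sequent) {Θ : Sequent}, WL (c.fill S) Θ →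
    ∃ (c' : Ctx) (S' : Sequent), SeqEquiv Θ (c'.fill S') ∧ WL S S' ∧ c'.depth = c.depth ∧
      ∀ T T', WL T T' → WL (c.fill T) (c'.fill T') := by
  intro c
  induction c with
  | hole Γ0 =>
    intro S Θ hw
    obtain ⟨A', B', rfl, h1, h2⟩ := hw.split Γ0 S rfl
    exact ⟨.hole A', B', SeqEquiv.refl _, h2, rfl, fun T T' h => h1.append h⟩
  | nest Γ0 c0 ih =>
    intro S Θ hw
    obtain ⟨E, e', Θ0, rfl, we, hw0⟩ := hw.invCons (.nest (c0.fill S)) Γ0 rfl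
    obtain ⟨N, rfl, wN⟩ := we.nest
    obtain ⟨c0', S', eqv, hS, hdep, M⟩ := ih S wN
    refine ⟨.nest (E ++ Θ0) c0', S',
      .trans (seqEquiv_of_perm List.perm_middle) (.consNest eqv (SeqEquiv.refl _)),
      hS, by simp [Ctx.depth, hdep], ?_⟩
    intro T T' h
    exact .consNest (M T T' h) (WL.push E hw0)

theorem wl_main : ∀ {n : ℕ} {Γ : Sequent}, DerivH n Γ → ∀ {Θ : Sequent}, WL Γ Θ →
    DerivH n Θ := by
  intro n Γ hd
  induction hd with
  | id n c a =>
    intro Θ hw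
    obtain ⟨c', S', eqv, hS, _, M⟩ := wl_decomp c _ hw
    obtain ⟨E1, p', Θ1, rfl, wp, h1⟩ := hS.invCons _ _ rfl
    cases wp.fml
    obtain ⟨E2, q', Θ2, rfl, wq, _⟩ := h1.invCons _ _ rfl
    cases wq.fml
    refine .exch ?_ (.id n (c'.ext (E1 ++ E2 ++ Θ2)) a)
    rw [Ctx.ext_fill]
    refine .trans (fill_equiv c' (seqEquiv_ms ?_)) eqv.symm
    simp only [← Multiset.coe_add, ← Multiset.cons_coe, ← Multiset.singleton_add]
    abel
  | @and n c A B hA hB ihA ihB =>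
    intro Θ hw
    obtain ⟨c', S', eqv, hS, _, M⟩ := wl_decomp c _ hw
    obtain ⟨E1, x', E2, rfl, wx, _⟩ := hS.invCons _ _ rfl
    cases wx.fml
    have dA : DerivH n ((c'.ext (E1 ++ E2)).fill [.fml A]) := by
      rw [Ctx.ext_fill]
      exact ihA (M _ _ (WL.push (E1 ++ E2) (WL.refl _)))
    have dB : DerivH n ((c'.ext (E1 ++ E2)).fill [.fml B]) := by
      rw [Ctx.ext_fill]
      exact ihB (M _ _ (WL.push (E1 ++ E2) (WL.refl _)))
    refine .exch ?_ (.and dA dB)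
    rw [Ctx.ext_fill]
    refine .trans (fill_equiv c' (seqEquiv_ms ?_)) eqv.symm
    simp only [← Multiset.coe_add, ← Multiset.cons_coe, ← Multiset.singleton_add]
    abel
  | @or n c A B hA ihA =>
    intro Θ hw
    obtain ⟨c', S', eqv, hS, _, M⟩ := wl_decomp c _ hw
    obtain ⟨E1, x', E2, rfl, wx, _⟩ := hS.invCons _ _ rfl
    cases wx.fml
    have dA : DerivH n ((c'.ext (E1 ++ E2)).fill [.fml A, .fml B]) := by
      rw [Ctx.ext_fill]
      exact ihA (M _ _ (WL.push (E1 ++ E2) (WL.refl _)))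
    refine .exch ?_ (.or dA)
    rw [Ctx.ext_fill]
    refine .trans (fill_equiv c' (seqEquiv_ms ?_)) eqv.symm
    simp only [← Multiset.coe_add, ← Multiset.cons_coe, ← Multiset.singleton_add]
    abel
  | @box n c A hA ihA =>
    intro Θ hw
    obtain ⟨c', S', eqv, hS, _, M⟩ := wl_decomp c _ hw
    obtain ⟨E1, x', E2, rfl, wx, _⟩ := hS.invCons _ _ rfl
    cases wx.fml
    have dA : DerivH n ((c'.ext (E1 ++ E2)).fill
        [.nest [.fml (.dia A.negate), .fml A]]) := by
      rw [Ctx.ext_fill]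
      exact ihA (M _ _ (WL.push (E1 ++ E2) (WL.refl _)))
    refine .exch ?_ (.box dA)
    rw [Ctx.ext_fill]
    refine .trans (fill_equiv c' (seqEquiv_ms ?_)) eqv.symm
    simp only [← Multiset.coe_add, ← Multiset.cons_coe, ← Multiset.singleton_add]
    abel
  | @dia n c d A hdep hprem ih =>
    intro Θ hw
    obtain ⟨c', S', eqv, hS, _, M⟩ := wl_decomp c _ hw
    obtain ⟨S1, S2, rfl, w1, w2⟩ := hS.split _ _ rfl
    obtain ⟨E1, x', E2, rfl, wx, _⟩ := w2.invCons _ _ rfl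
    cases wx.fml
    obtain ⟨d', S0, eqv1, _, hdep', M1⟩ := wl_decomp d [] w1
    have hp : DerivH n ((c'.ext (E1 ++ E2)).fill
        ((d'.ext S0).fill [.fml A] ++ [.fml (.dia A)])) := by
      apply ih
      rw [Ctx.ext_fill, Ctx.ext_fill]
      apply M
      exact WL.push (E1 ++ E2)
        (WL.append (M1 _ _ (WL.push S0 (WL.refl _))) (WL.refl _))
    have hd' : 0 < (d'.ext S0).depth := by rw [Ctx.ext_depth, hdep']; exact hdep
    refine .exch ?_ (.dia (c'.ext (E1 ++ E2)) (d'.ext S0) hd' hp)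
    rw [Ctx.ext_fill, Ctx.ext_fill, List.append_nil]
    refine .trans (fill_equiv c' ?_) eqv.symm
    refine .trans (seqEquiv_ms ?_) (SeqEquiv.appR eqv1.symm (E1 ++ .fml (.dia A) :: E2))
    simp only [← Multiset.coe_add, ← Multiset.cons_coe, ← Multiset.singleton_add]
    abel
  | exch h _ ih =>
    intro Θ hw
    obtain ⟨Θ', w, eq⟩ := wl_commute h Θ hw
    exact .exch eq (ih w)
  | up _ ih =>
    intro Θ hw
    exact .up (ih hw)

theorem wl_fill (c : Ctx) (Δ : Sequent) : WL (c.fill []) (c.fill Δ) := by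
  induction c with
  | hole Γ => exact WL.append (WL.refl Γ) (WL.nilAny Δ)
  | nest Γ c ih => exact .consNest ih (WL.refl Γ)

/-- weakening is height-preserving admissible. -/
theorem weakening_admissible (h : ℕ) (c : Ctx)
    (hd : DerivH h (c.fill [])) (Δ : Sequent) :
    DerivH h (c.fill Δ) := by
  exact wl_main hd (wl_fill c Δ)
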